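/- arXiv:2509.00737 — 3 statements merged into one kernel-verified Lean document; each statement's English description precedes it below -/
import Mathlib

section
/- If g : X → ℝ is L-smooth with L > 0, then the map x ↦ ∇g(x) + L·x is (1/(2L))-cocoercive, i.e., ‖(∇g(x)+Lx) − (∇g(y)+Ly)‖² ≤ 2L⟨(∇g(x)+Lx) − (∇g(y)+Ly), x − y⟩ for all x, y. -/
open scoped RealInnerProductSpace

/-- If `g : X → ℝ` is `L`-smooth with `L > 0`, then `x ↦ ∇g(x) + L • x` is
`(1/(2L))`-cocoercive. -/
theorem gradient_add_smul_cocoercive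
    {X : Type*} [NormedAddCommGroup X] [InnerProductSpace ℝ X]
    [FiniteDimensional ℝ X]
    (g : X → ℝ) (L : ℝ) (hL : 0 < L)
    (hdiff : Differentiable ℝ g)
    (hlip : ∀ x y : X, ‖gradient g x - gradient g y‖ ≤ L * ‖x - y‖) :
    ∀ x y : X,
      ‖(gradient g x + L • x) - (gradient g y + L • y)‖ ^ 2 ≤
        2 * L * ⟪(gradient g x + L • x) - (gradient g y + L • y), x - y⟫ := by
  intro x y
  set u := gradient g x - gradient g y with hu
  have key : ‖u‖ ^ 2 ≤ (L * ‖x - y‖) ^ 2 := by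
    have h := hlip x y
    nlinarith [norm_nonneg u]
  have heq : (gradient g x + L • x) - (gradient g y + L • y) = u + L • (x - y) := by
    rw [hu, smul_sub]; abel
  rw [heq]
  have h1 : ‖u + L • (x - y)‖ ^ 2
      = ‖u‖ ^ 2 + 2 * ⟪u, L • (x - y)⟫ + ‖L • (x - y)‖ ^ 2 :=
    norm_add_sq_real _ _
  have h2 : ⟪u + L • (x - y), x - y⟫ = ⟪u, x - y⟫ + L * ⟪x - y, x - y⟫ := by
    rw [inner_add_left, real_inner_smul_left]
  have h3 : ⟪u, L • (x - y)⟫ = L * ⟪u, x - y⟫ := real_inner_smul_right _ _ _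
  have h4 : ‖L • (x - y)‖ ^ 2 = L ^ 2 * ‖x - y‖ ^ 2 := by
    rw [norm_smul, Real.norm_eq_abs, abs_of_pos hL]; ring
  have h5 : ⟪x - y, x - y⟫ = ‖x - y‖ ^ 2 := real_inner_self_eq_norm_sq _
  rw [h1, h2, h3, h4, h5]
  nlinarith [key]
end

section
/- Let g : X → ℝ be L-smooth and τ-weakly convex with 0 ≤ τ ≤ L. Then for all x, y ∈ X: ‖∇g(x) − ∇g(y)‖² ≤ (L − τ)⟨∇g(x) − ∇g(y), x − y⟩ + Lτ‖x − y‖². -/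
/-!
Adding `τ/2 ‖·‖²` makes `g` convex and turns `∇g` into `∇g + τ • id`, which is
`(L + τ)`-Lipschitz. The gradient of a convex function with `M`-Lipschitz gradient is
`1/M`-cocoercive: comparing the convexity lower bound at `a` with the descent-lemma upper bound
at `b`, both evaluated at the gradient step `b - M⁻¹ (∇f b - ∇f a)`, gives
`f a + ⟪∇f a, b - a⟫ + ‖∇f b - ∇f a‖² / (2M) ≤ f b`, and symmetrising in `a, b` gives
cocoercivity. For `M = L + τ`, expanding `‖u + τ d‖² ≤ (L + τ) ⟪u + τ d, d⟫` with
`u = ∇g x - ∇g y`, `d = x - y` is exactly the claimed inequality.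
-/

open scoped RealInnerProductSpace

theorem le_add_deriv_add_of_deriv_sub_le {φ φ' : ℝ → ℝ} {K : ℝ}
    (hφ : ∀ t, HasDerivAt φ (φ' t) t) (hK : ∀ t ∈ Set.Ioo (0 : ℝ) 1, φ' t - φ' 0 ≤ K * t) :
    φ 1 ≤ φ 0 + φ' 0 + K / 2 := by
  let χ : ℝ → ℝ := fun t => φ t - t * φ' 0 - K / 2 * t ^ 2
  have hχ : ∀ t, HasDerivAt χ (φ' t - φ' 0 - K * t) t := fun t => by
    refine (((hφ t).sub ((hasDerivAt_id' t).mul_const (φ' 0))).sub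
      ((hasDerivAt_pow 2 t).const_mul (K / 2))).congr_deriv ?_
    norm_num
    ring
  have hanti : AntitoneOn χ (Set.Icc 0 1) :=
    antitoneOn_of_hasDerivWithinAt_nonpos (convex_Icc 0 1)
      (fun t _ => (hχ t).continuousAt.continuousWithinAt) (fun t _ => (hχ t).hasDerivWithinAt)
      (fun t ht => by rw [interior_Icc] at ht; linarith [hK t ht])
  have := hanti (Set.left_mem_Icc.2 zero_le_one) (Set.right_mem_Icc.2 zero_le_one) zero_le_one
  simp only [χ] at this
  linarith

section

variable {X : Type*} [NormedAddCommGroup X] [InnerProductSpace ℝ X] [CompleteSpace X]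
  {f : X → ℝ} {F : X → X}

theorem HasGradientAt.hasDerivAt_comp_add_smul {f' x d : X} {t : ℝ}
    (hf : HasGradientAt f f' (x + t • d)) :
    HasDerivAt (fun s : ℝ => f (x + s • d)) ⟪f', d⟫ t := by
  have hline : HasDerivAt (fun s : ℝ => x + s • d) d t := by
    simpa using ((hasDerivAt_id t).smul_const d).const_add x
  simpa [InnerProductSpace.toDual_apply_apply, Function.comp_def] using
    hf.hasFDerivAt.comp_hasDerivAt t hline

theorem ConvexOn.inner_le_sub_of_hasGradientAt (hf : ConvexOn ℝ Set.univ f) {f' x : X}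
    (hx : HasGradientAt f f' x) (y : X) :
    ⟪f', y - x⟫ ≤ f y - f x := by
  have hline : ConvexOn ℝ Set.univ (fun t : ℝ => f (x + t • (y - x))) := by
    have hcomp : f ∘ AffineMap.lineMap x y = fun t : ℝ => f (x + t • (y - x)) := by
      ext t
      simp [AffineMap.lineMap_apply, add_comm]
    simpa [hcomp] using hf.comp_affineMap (AffineMap.lineMap x y)
  have hder : HasDerivAt (fun t : ℝ => f (x + t • (y - x))) ⟪f', y - x⟫ 0 :=
    HasGradientAt.hasDerivAt_comp_add_smul (by simpa using hx)
  simpa [slope_def_field] using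
    hline.le_slope_of_hasDerivAt (Set.mem_univ 0) (Set.mem_univ 1) one_pos hder

theorem le_add_inner_add_of_lipschitz_gradient {M : ℝ} (hF : ∀ z, HasGradientAt f (F z) z)
    (hlip : ∀ a b, ‖F a - F b‖ ≤ M * ‖a - b‖) (x y : X) :
    f y ≤ f x + ⟪F x, y - x⟫ + M / 2 * ‖y - x‖ ^ 2 := by
  have hbound : ∀ t ∈ Set.Ioo (0 : ℝ) 1,
      ⟪F (x + t • (y - x)), y - x⟫ - ⟪F (x + (0 : ℝ) • (y - x)), y - x⟫ ≤
        M * ‖y - x‖ ^ 2 * t := fun t ht => by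
    have hstep : ‖x + t • (y - x) - x‖ = t * ‖y - x‖ := by
      simp [norm_smul, abs_of_pos ht.1]
    calc ⟪F (x + t • (y - x)), y - x⟫ - ⟪F (x + (0 : ℝ) • (y - x)), y - x⟫
        = ⟪F (x + t • (y - x)) - F x, y - x⟫ := by simp [inner_sub_left]
      _ ≤ ‖F (x + t • (y - x)) - F x‖ * ‖y - x‖ := real_inner_le_norm _ _
      _ ≤ M * (t * ‖y - x‖) * ‖y - x‖ := by
          rw [← hstep]; gcongr; exact hlip _ _
      _ = M * ‖y - x‖ ^ 2 * t := by ring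
  have := le_add_deriv_add_of_deriv_sub_le
    (fun t => (hF (x + t • (y - x))).hasDerivAt_comp_add_smul) hbound
  simp only [zero_smul, add_zero, one_smul, add_sub_cancel] at this
  linarith

theorem ConvexOn.add_inner_add_norm_sq_div_le {M : ℝ} (hM : 0 < M) (hf : ConvexOn ℝ Set.univ f)
    (hF : ∀ z, HasGradientAt f (F z) z) (hlip : ∀ a b, ‖F a - F b‖ ≤ M * ‖a - b‖) (a b : X) :
    f a + ⟪F a, b - a⟫ + ‖F b - F a‖ ^ 2 / (2 * M) ≤ f b := by
  set u := F b - F a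
  have hlower := hf.inner_le_sub_of_hasGradientAt (hF a) (b - M⁻¹ • u)
  have hupper := le_add_inner_add_of_lipschitz_gradient hF hlip b (b - M⁻¹ • u)
  rw [show b - M⁻¹ • u - a = (b - a) - M⁻¹ • u by abel, inner_sub_right,
    real_inner_smul_right] at hlower
  rw [sub_sub_cancel_left, inner_neg_right, real_inner_smul_right, norm_neg, norm_smul,
    Real.norm_eq_abs, abs_of_pos (inv_pos.2 hM)] at hupper
  have hu : M⁻¹ * ⟪F b, u⟫ - M⁻¹ * ⟪F a, u⟫ = M⁻¹ * ‖u‖ ^ 2 := by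
    rw [← mul_sub, ← inner_sub_left, real_inner_self_eq_norm_sq]
  have hquad : M / 2 * (M⁻¹ * ‖u‖) ^ 2 = M⁻¹ * ‖u‖ ^ 2 - ‖u‖ ^ 2 / (2 * M) := by
    field_simp
    ring
  linarith

theorem ConvexOn.norm_sub_sq_le_mul_inner {M : ℝ} (hM : 0 < M) (hf : ConvexOn ℝ Set.univ f)
    (hF : ∀ z, HasGradientAt f (F z) z) (hlip : ∀ a b, ‖F a - F b‖ ≤ M * ‖a - b‖) (x y : X) :
    ‖F x - F y‖ ^ 2 ≤ M * ⟪F x - F y, x - y⟫ := by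
  have hxy := hf.add_inner_add_norm_sq_div_le hM hF hlip x y
  have hyx := hf.add_inner_add_norm_sq_div_le hM hF hlip y x
  have hinner : ⟪F x, y - x⟫ + ⟪F y, x - y⟫ = -⟪F x - F y, x - y⟫ := by
    rw [← neg_sub x y, inner_neg_right, inner_sub_left]
    ring
  rw [norm_sub_rev (F y)] at hxy
  have hsum : ‖F x - F y‖ ^ 2 / M ≤ ⟪F x - F y, x - y⟫ := by
    rw [show ‖F x - F y‖ ^ 2 / M = 2 * (‖F x - F y‖ ^ 2 / (2 * M)) by field_simp]
    linarith
  rwa [div_le_iff₀' hM] at hsum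

theorem HasGradientAt.add_mul_norm_sq {f' x : X} (hf : HasGradientAt f f' x) (c : ℝ) :
    HasGradientAt (fun z => f z + c / 2 * ‖z‖ ^ 2) (f' + c • x) x := by
  rw [hasGradientAt_iff_hasFDerivAt] at hf ⊢
  refine (hf.add ((hasStrictFDerivAt_norm_sq x).hasFDerivAt.const_mul (c / 2))).congr_fderiv ?_
  ext v
  simp only [add_apply, InnerProductSpace.toDual_apply_apply,
    smul_apply, coe_innerSL_apply, nsmul_eq_mul, Nat.cast_ofNat, smul_eq_mul,
    map_add, map_smul, add_right_inj]
  ring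

end

theorem smooth_weakly_convex_interpolation_general
    {X : Type*} [NormedAddCommGroup X] [InnerProductSpace ℝ X]
    [FiniteDimensional ℝ X]
    (g : X → ℝ) (L τ : ℝ) (hL : 0 < L) (hτ0 : 0 ≤ τ)
    (hdiff : Differentiable ℝ g)
    (hlip : ∀ x y : X, ‖gradient g x - gradient g y‖ ≤ L * ‖x - y‖)
    (hwc : ConvexOn ℝ Set.univ (fun x => g x + τ / 2 * ‖x‖ ^ 2)) :
    ∀ x y : X,
      ‖gradient g x - gradient g y‖ ^ 2 ≤
        (L - τ) * ⟪gradient g x - gradient g y, x - y⟫ + L * τ * ‖x - y‖ ^ 2 := by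
  intro x y
  have hsplit : ∀ a b : X, gradient g a + τ • a - (gradient g b + τ • b) =
      (gradient g a - gradient g b) + τ • (a - b) := fun a b => by
    rw [smul_sub]; abel
  have hgrad : ∀ z, HasGradientAt (fun x => g x + τ / 2 * ‖x‖ ^ 2) (gradient g z + τ • z) z :=
    fun z => (hdiff z).hasGradientAt.add_mul_norm_sq τ
  have hlip_shift : ∀ a b : X,
      ‖gradient g a + τ • a - (gradient g b + τ • b)‖ ≤ (L + τ) * ‖a - b‖ := fun a b => by
    rw [hsplit, add_mul]
    grw [norm_add_le, hlip, norm_smul, Real.norm_eq_abs, abs_of_nonneg hτ0]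
  have hco := hwc.norm_sub_sq_le_mul_inner (by linarith) hgrad hlip_shift x y
  rw [hsplit, norm_add_sq_real, inner_add_left, real_inner_smul_right, real_inner_smul_left,
    real_inner_self_eq_norm_sq, norm_smul, Real.norm_eq_abs, abs_of_nonneg hτ0] at hco
  linear_combination hco

/-- Interpolation inequality for `L`-smooth and `τ`-weakly convex functions:
`‖∇g(x) − ∇g(y)‖² ≤ (L − τ)⟨∇g(x) − ∇g(y), x − y⟩ + Lτ‖x − y‖²`. -/
theorem smooth_weakly_convex_interpolation
    {X : Type*} [NormedAddCommGroup X] [InnerProductSpace ℝ X]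
    [FiniteDimensional ℝ X]
    (g : X → ℝ) (L τ : ℝ) (hL : 0 < L) (hτ0 : 0 ≤ τ) (hτL : τ ≤ L)
    (hdiff : Differentiable ℝ g)
    (hlip : ∀ x y : X, ‖gradient g x - gradient g y‖ ≤ L * ‖x - y‖)
    (hwc : ConvexOn ℝ Set.univ (fun x => g x + τ / 2 * ‖x‖ ^ 2)) :
    ∀ x y : X,
      ‖gradient g x - gradient g y‖ ^ 2 ≤
        (L - τ) * ⟪gradient g x - gradient g y, x - y⟫ + L * τ * ‖x - y‖ ^ 2 :=
  smooth_weakly_convex_interpolation_general g L τ hL hτ0 hdiff hlip hwc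
end

section
/- Variance decomposition for the PAGE estimator: let f = (1/n)∑ᵢ fᵢ with each fᵢ differentiable, and fix x, x⁺ ∈ X and g ∈ X. If i is chosen uniformly at random from {1,…,n} and g⁺ := g + ∇f_i(x⁺) − ∇f_i(x), then E[‖g⁺ − ∇f(x⁺)‖²] = ‖g − ∇f(x)‖² + (1/n)∑ᵢ ‖∇fᵢ(x⁺) − ∇fᵢ(x) − ∇f(x⁺) + ∇f(x)‖². -/
/-!
Write `a := g - ∇f(x)` and `dᵢ := ∇fᵢ(x⁺) - ∇fᵢ(x) - (∇f(x⁺) - ∇f(x))`, so that the error of the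
estimator is `a + dᵢ`. Since `∇f` is the average of the `∇fᵢ`, the `dᵢ` have mean zero, and expanding
`‖a + dᵢ‖²` the cross terms `2⟪a, dᵢ⟫` average out.
-/

open Finset
open scoped RealInnerProductSpace

section Gradient

variable {F : Type*} [NormedAddCommGroup F] [InnerProductSpace ℝ F] [CompleteSpace F]
  {x : F}

theorem HasGradientAt.fun_sum {ι : Type*} {s : Finset ι} {f : ι → F → ℝ} {f' : ι → F}
    (h : ∀ i ∈ s, HasGradientAt (f i) (f' i) x) :
    HasGradientAt (fun y => ∑ i ∈ s, f i y) (∑ i ∈ s, f' i) x := by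
  rw [hasGradientAt_iff_hasFDerivAt, map_sum]
  exact HasFDerivAt.fun_sum fun i hi => (h i hi).hasFDerivAt

theorem HasGradientAt.const_mul {f : F → ℝ} {f' : F} (c : ℝ) (h : HasGradientAt f f' x) :
    HasGradientAt (fun y => c * f y) (c • f') x := by
  rw [hasGradientAt_iff_hasFDerivAt, map_smul]
  exact h.hasFDerivAt.const_mul c

theorem gradient_const_mul_sum {ι : Type*} [Fintype ι] {f : ι → F → ℝ}
    (hf : ∀ i, DifferentiableAt ℝ (f i) x) (c : ℝ) :
    gradient (fun y => c * ∑ i, f i y) x = c • ∑ i, gradient (f i) x :=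
  ((HasGradientAt.fun_sum fun i _ => (hf i).hasGradientAt).const_mul c).gradient

end Gradient

theorem sum_norm_add_sq_of_sum_eq_zero {E ι : Type*} [NormedAddCommGroup E]
    [InnerProductSpace ℝ E] {s : Finset ι} (a : E) {d : ι → E} (hd : ∑ i ∈ s, d i = 0) :
    ∑ i ∈ s, ‖a + d i‖ ^ 2 = #s * ‖a‖ ^ 2 + ∑ i ∈ s, ‖d i‖ ^ 2 := by
  have hcross : ∑ i ∈ s, ⟪a, d i⟫ = 0 := by rw [← inner_sum, hd, inner_zero_right]
  simp only [norm_add_sq_real, sum_add_distrib, sum_const, nsmul_eq_mul, ← mul_sum, hcross]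
  ring

/-- Variance decomposition for the PAGE estimator: with `i` uniform in `{1,…,n}` and
`g⁺ = g + ∇fᵢ(x⁺) − ∇fᵢ(x)`,
`E‖g⁺ − ∇f(x⁺)‖² = ‖g − ∇f(x)‖² + (1/n)∑ᵢ‖∇fᵢ(x⁺) − ∇fᵢ(x) − ∇f(x⁺) + ∇f(x)‖²`. -/
theorem page_estimator_variance_decomposition
    {X : Type*} [NormedAddCommGroup X] [InnerProductSpace ℝ X]
    [FiniteDimensional ℝ X]
    (n : ℕ) (hn : 0 < n) (f : Fin n → X → ℝ)
    (hdiff : ∀ i, Differentiable ℝ (f i))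
    (F : X → ℝ) (hF : F = fun y => (1 / n : ℝ) * ∑ i, f i y)
    (x xp g : X) :
    (1 / n : ℝ) * ∑ i, ‖(g + gradient (f i) xp - gradient (f i) x) - gradient F xp‖ ^ 2 =
      ‖g - gradient F x‖ ^ 2 +
        (1 / n : ℝ) * ∑ i,
          ‖gradient (f i) xp - gradient (f i) x - gradient F xp + gradient F x‖ ^ 2 := by
  have hn0 : (n : ℝ) ≠ 0 := Nat.cast_ne_zero.mpr hn.ne'
  have hgrad (y : X) : (n : ℝ) • gradient F y = ∑ i, gradient (f i) y := by
    rw [hF, gradient_const_mul_sum (fun i => hdiff i y), smul_smul, mul_one_div_cancel hn0,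
      one_smul]
  set a := g - gradient F x
  set d := fun i => gradient (f i) xp - gradient (f i) x - gradient F xp + gradient F x
  have hd : ∑ i, d i = 0 := by
    simp only [d, sum_add_distrib, sum_sub_distrib, sum_const, card_univ, Fintype.card_fin,
      ← Nat.cast_smul_eq_nsmul ℝ, ← hgrad]
    abel
  have hsplit (i : Fin n) : g + gradient (f i) xp - gradient (f i) x - gradient F xp = a + d i := by
    simp only [a, d]
    abel
  simp only [hsplit]
  rw [sum_norm_add_sq_of_sum_eq_zero a hd, card_univ, Fintype.card_fin, mul_add, ← mul_assoc,
    one_div_mul_cancel hn0, one_mul]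
end
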